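/- arXiv:1401.7183 — 2 statements merged into one kernel-verified Lean document; each statement's English description precedes it below -/
import Mathlib

section
/- Let S be a finite nonempty set of positive integers and set s = max S. Then there exists a periodic dominating set D of the distance graph G(S), with period at most (2s)·2^{2s}, such that for every dominating set D' of G(S) one has δ(D) ≤ liminf_{N→∞} |D' ∩ [−N,N]|/(2N+1); that is, the minimum density of a dominating set in G(S) is achieved by a periodic set with period at most (2s)·2^{2s}. -/
/-!
Domination is local: a point is dominated iff the ball of radius `s` around it meets the set.
Hence if the windows of length `2s` at `a` and `a + m` of a dominating set `D` agree, repeating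
the block `[a, a + m)` with period `m` gives again a dominating set, of density
`|D ∩ [a, a + m)| / m`.

For a periodic dominating set of period `p > 2 ^ (2s)`, two of the first `2 ^ (2s) + 1` windows
agree, at `i < j`; they cut a period into the blocks `[i, j)` and `[j, i + p)`, both of which
repeat as above, and by the mediant inequality one of them is at most as dense. This descent
reaches a period at most `2 ^ (2s)`, where only finitely many densities occur, so one is minimal.
Conversely, adding everything outside `[-N, N]` to a dominating set `D'` makes its windows at
`-N - 2s` and `N + 1` full, and repeating `[-N - 2s, N + 1)` gives density at most
`(|D' ∩ [-N, N]| + 2s) / (2N + 1)`; so the minimum is at most the lower density of `D'`.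
-/

open Filter

/-- The upper density of a set of integers. -/
noncomputable def density (A : Set ℤ) : ℝ :=
  Filter.limsup
    (fun N : ℕ => ((A ∩ Set.Icc (-(N : ℤ)) (N : ℤ)).ncard : ℝ) / (2 * (N : ℝ) + 1))
    Filter.atTop

/-- The lower density of a set of integers. -/
noncomputable def densityLow (A : Set ℤ) : ℝ :=
  Filter.liminf
    (fun N : ℕ => ((A ∩ Set.Icc (-(N : ℤ)) (N : ℤ)).ncard : ℝ) / (2 * (N : ℝ) + 1))
    Filter.atTop

/-- A set of integers is dominating in the distance graph `G(S)` if every integer is in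
the set or adjacent to an element of the set. -/
def IsDomSet (S : Finset ℕ) (D : Set ℤ) : Prop :=
  ∀ z : ℤ, z ∈ D ∨ ∃ s ∈ S, z + (s : ℤ) ∈ D ∨ z - (s : ℤ) ∈ D

open Set Function Topology

noncomputable def windowCount (D : Set ℤ) (x : ℤ) (n : ℕ) : ℕ :=
  (D ∩ Ico x (x + n)).ncard

lemma windowCount_add (D : Set ℤ) (x : ℤ) (m n : ℕ) :
    windowCount D x (m + n) = windowCount D x m + windowCount D (x + m) n := by
  rw [windowCount, windowCount, windowCount, ← ncard_union_eq (Disjoint.mono inter_subset_right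
      inter_subset_right Ico_disjoint_Ico_same), ← inter_union_distrib_left,
    Nat.cast_add, ← add_assoc, Ico_union_Ico_eq_Ico (by omega) (by omega)]

lemma windowCount_le (D : Set ℤ) (x : ℤ) (n : ℕ) : windowCount D x n ≤ n := by
  refine (ncard_inter_le_ncard_right _ _).trans_eq ?_
  rw [← Finset.coe_Ico, ncard_coe_finset, Int.card_Ico]
  omega

lemma windowCount_congr {D E : Set ℤ} {x y : ℤ} {n : ℕ}
    (h : ∀ i < n, x + i ∈ D ↔ y + i ∈ E) : windowCount D x n = windowCount E y n := by
  have hpre : D ∩ Ico x (x + n) = (· + (y - x)) ⁻¹' (E ∩ Ico y (y + n)) := by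
    ext z
    simp only [mem_inter_iff, mem_Ico, mem_preimage]
    refine ⟨fun ⟨hz, h₁, h₂⟩ => ?_, fun ⟨hz, h₁, h₂⟩ => ?_⟩ <;>
      obtain ⟨i, rfl⟩ : ∃ i : ℕ, z = x + i := ⟨(z - x).toNat, by omega⟩ <;>
      rw [show x + i + (y - x) = y + i by ring] at *
    · exact ⟨(h i (by omega)).1 hz, by omega, by omega⟩
    · exact ⟨(h i (by omega)).2 hz, by omega, by omega⟩
  rw [windowCount, windowCount, hpre, ncard_preimage_of_injective_subset_range
    (add_left_injective _) fun z _ => ⟨z - (y - x), sub_add_cancel _ _⟩]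

lemma ncard_inter_Icc_eq_windowCount (A : Set ℤ) (N : ℕ) :
    (A ∩ Icc (-(N : ℤ)) N).ncard = windowCount A (-N) (2 * N + 1) := by
  rw [windowCount]
  congr 2
  ext z
  simp only [mem_Icc, mem_Ico]
  push_cast
  omega

lemma tendsto_const_div_two_mul_add_one (C : ℝ) :
    Tendsto (fun N : ℕ => C / (2 * N + 1)) atTop (𝓝 0) :=
  tendsto_const_nhds.div_atTop <| tendsto_atTop_add_const_right _ _ <|
    tendsto_natCast_atTop_atTop.const_mul_atTop two_pos

section Periodic

variable {D : Set ℤ} {p : ℕ}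

lemma windowCount_add_period (hD : Periodic (· ∈ D) (p : ℤ)) (x : ℤ) (n : ℕ) :
    windowCount D (x + p) n = windowCount D x n :=
  windowCount_congr fun i _ => by rw [add_right_comm]; exact iff_of_eq (hD _)

lemma windowCount_period_eq (hD : Periodic (· ∈ D) (p : ℤ)) (x : ℤ) :
    windowCount D x p = windowCount D 0 p := by
  have hstep : Periodic (windowCount D · p) 1 := fun y => by
    show windowCount D (y + 1) p = windowCount D y p
    have h := windowCount_add D y 1 p
    rw [add_comm 1 p, windowCount_add, windowCount_add_period hD] at h
    push_cast at h
    omega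
  simpa using hstep.int_mul_eq x

lemma windowCount_mul_period (hD : Periodic (· ∈ D) (p : ℤ)) (x : ℤ) (k : ℕ) :
    windowCount D x (k * p) = k * windowCount D 0 p := by
  induction k with
  | zero => simp [windowCount]
  | succ k ih =>
    rw [add_mul, one_mul, windowCount_add, ih, windowCount_period_eq hD (x + _), add_mul, one_mul]

lemma abs_windowCount_div_sub_le (hp : 0 < p) (hD : Periodic (· ∈ D) (p : ℤ)) (x : ℤ) {n : ℕ}
    (hn : 0 < n) : |(windowCount D x n : ℝ) / n - windowCount D 0 p / p| ≤ p / n := by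
  set c := windowCount D 0 p
  set e := windowCount D (x + ↑(n / p * p)) (n % p)
  have hsplit : windowCount D x n = n / p * c + e := by
    rw [← windowCount_mul_period hD x, ← windowCount_add, Nat.div_add_mod']
  have he : e ≤ n % p := windowCount_le _ _ _
  have hr : n % p < p := Nat.mod_lt _ hp
  have hc : c ≤ p := windowCount_le _ _ _
  have hn' : (n : ℝ) = (n / p : ℕ) * p + (n % p : ℕ) := by
    exact_mod_cast (Nat.div_add_mod' n p).symm
  have hp0 : (0 : ℝ) < p := by exact_mod_cast hp
  have hn0 : (0 : ℝ) < n := by exact_mod_cast hn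
  -- the full periods cancel, leaving `e * p - (n % p) * c` with both terms in `[0, p * p]`
  have key : |(windowCount D x n : ℝ) * p - n * c| ≤ p * p := by
    have hep : (e : ℝ) * p ≤ p * p := by gcongr; exact_mod_cast he.trans hr.le
    have hrc : ((n % p : ℕ) : ℝ) * c ≤ p * p := by gcongr
    have hcancel : (windowCount D x n : ℝ) * p - n * c = e * p - (n % p : ℕ) * c := by
      rw [hsplit, hn']
      push_cast
      ring
    rw [hcancel]
    exact abs_sub_le_of_nonneg_of_le (by positivity) hep (by positivity) hrc
  rw [div_sub_div _ _ hn0.ne' hp0.ne', abs_div, abs_of_pos (a := (n : ℝ) * p) (by positivity),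
    div_le_div_iff₀ (by positivity) hn0]
  nlinarith

lemma density_eq_of_periodic (hp : 0 < p) (hD : Periodic (· ∈ D) (p : ℤ)) :
    density D = windowCount D 0 p / p := by
  refine Tendsto.limsup_eq ?_
  rw [tendsto_iff_dist_tendsto_zero]
  refine squeeze_zero (fun _ => dist_nonneg) (fun N => ?_) (tendsto_const_div_two_mul_add_one p)
  rw [Real.dist_eq, ncard_inter_Icc_eq_windowCount]
  exact_mod_cast abs_windowCount_div_sub_le hp hD (-N) (Nat.succ_pos (2 * N))

end Periodic

def periodicExtension (D : Set ℤ) (a : ℤ) (m : ℕ) : Set ℤ :=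
  {z | a + (z - a) % m ∈ D}

section PeriodicExtension

variable {S : Finset ℕ} {D : Set ℤ} {a : ℤ} {m : ℕ}

lemma periodic_periodicExtension : Periodic (· ∈ periodicExtension D a m) (m : ℤ) := fun z => by
  simp only [periodicExtension, mem_ofPred_eq, add_sub_right_comm, Int.add_emod_right]

lemma mem_periodicExtension_iff_of_mem_Ico {z : ℤ} (hz : z ∈ Ico a (a + m)) :
    z ∈ periodicExtension D a m ↔ z ∈ D := by
  rw [periodicExtension, mem_ofPred_eq, Int.emod_eq_of_lt (by grind) (by grind), add_sub_cancel]

lemma density_periodicExtension (hm : 0 < m) :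
    density (periodicExtension D a m) = windowCount D a m / m := by
  rw [density_eq_of_periodic hm periodic_periodicExtension,
    ← windowCount_period_eq periodic_periodicExtension a,
    windowCount_congr fun i hi => mem_periodicExtension_iff_of_mem_Ico (by grind)]

lemma isDomSet_of_periodic {E : Set ℤ} (hm : 0 < m) (hE : Periodic (· ∈ E) (m : ℤ)) (b : ℤ)
    (h : ∀ z ∈ Ico b (b + m), z ∈ E ∨ ∃ t ∈ S, z + (t : ℤ) ∈ E ∨ z - (t : ℤ) ∈ E) :
    IsDomSet S E := by
  have hE' : ∀ z : ℤ, z + m ∈ E ↔ z ∈ E := fun z => iff_of_eq (hE z)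
  have hdom : Periodic (fun z => z ∈ E ∨ ∃ t ∈ S, z + (t : ℤ) ∈ E ∨ z - (t : ℤ) ∈ E) (m : ℤ) :=
    fun z => by simp only [add_right_comm z (m : ℤ), add_sub_right_comm z (m : ℤ), hE']
  intro z
  have hz : z - (z - b) / m * m = b + (z - b) % m := by rw [Int.emod_def]; ring
  have hm' : (0 : ℤ) < m := by exact_mod_cast hm
  rw [← hdom.sub_int_mul_eq ((z - b) / m), Int.cast_id]
  refine h _ ⟨?_, ?_⟩ <;> rw [hz]
  · linarith [Int.emod_nonneg (z - b) hm'.ne']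
  · linarith [Int.emod_lt_of_pos (z - b) hm']

lemma mem_periodicExtension_iff_of_window_eq {L : ℕ} (hm : 0 < m)
    (hwin : ∀ t < L, a + t ∈ D ↔ a + m + t ∈ D) (n : ℕ) (hn : n < m + L) :
    a + n ∈ periodicExtension D a m ↔ a + n ∈ D := by
  induction n using Nat.strong_induction_on with
  | _ n ih =>
    by_cases hnm : n < m
    · exact mem_periodicExtension_iff_of_mem_Ico (by grind)
    have hsub : a + n = a + (n - m : ℕ) + m := by push_cast [Nat.cast_sub (not_lt.1 hnm)]; ring
    rw [hsub]
    refine (iff_of_eq (periodic_periodicExtension _)).trans ((ih _ (by omega) (by omega)).trans ?_)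
    rw [add_right_comm]
    exact hwin _ (by omega)

lemma isDomSet_periodicExtension {s : ℕ} (hs : ∀ t ∈ S, t ≤ s) (hD : IsDomSet S D) (hm : 0 < m)
    (hwin : ∀ t < 2 * s, a + t ∈ D ↔ a + m + t ∈ D) :
    IsDomSet S (periodicExtension D a m) := by
  have hagree : ∀ z, a ≤ z → z < a + m + 2 * s → (z ∈ periodicExtension D a m ↔ z ∈ D) :=
    fun z h₁ h₂ => by
      have := mem_periodicExtension_iff_of_window_eq hm hwin (z - a).toNat (by omega)
      rwa [Int.toNat_of_nonneg (by omega), add_sub_cancel] at this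
  refine isDomSet_of_periodic hm periodic_periodicExtension (a + s) fun z hz => ?_
  rw [mem_Ico] at hz
  rcases hD z with h | ⟨t, ht, h | h⟩
  · exact .inl ((hagree z (by omega) (by omega)).2 h)
  all_goals have := hs t ht
  · exact .inr ⟨t, ht, .inl ((hagree _ (by omega) (by omega)).2 h)⟩
  · exact .inr ⟨t, ht, .inr ((hagree _ (by omega) (by omega)).2 h)⟩

end PeriodicExtension

lemma exists_window_eq (D : Set ℤ) (L : ℕ) :
    ∃ i j : ℕ, i < j ∧ j ≤ 2 ^ L ∧ ∀ t < L, (i : ℤ) + t ∈ D ↔ (j : ℤ) + t ∈ D := by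
  obtain ⟨x, y, hxy, hf⟩ := Fintype.exists_ne_map_eq_of_card_lt
    (fun (i : Fin (2 ^ L + 1)) (t : Fin L) => (i : ℤ) + (t : ℕ) ∈ D) (by simp [Fintype.card_prop])
  have hwin : ∀ t < L, (x : ℤ) + t ∈ D ↔ (y : ℤ) + t ∈ D := fun t ht =>
    iff_of_eq (congrFun hf ⟨t, ht⟩)
  rcases hxy.lt_or_gt with h | h
  · exact ⟨x, y, h, Nat.lt_succ_iff.1 y.2, hwin⟩
  · exact ⟨y, x, h, Nat.lt_succ_iff.1 x.2, fun t ht => (hwin t ht).symm⟩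

lemma div_le_mediant_or_div_le_mediant {a b m n : ℝ} (hm : 0 < m) (hn : 0 < n) :
    a / m ≤ (a + b) / (m + n) ∨ b / n ≤ (a + b) / (m + n) := by
  rcases le_total (a * n) (b * m) with h | h
  · left
    rw [div_le_div_iff₀ hm (by positivity)]
    nlinarith
  · right
    rw [div_le_div_iff₀ hn (by positivity)]
    nlinarith

def IsPeriodicDomSet (S : Finset ℕ) (D : Set ℤ) (p : ℕ) : Prop :=
  IsDomSet S D ∧ 0 < p ∧ Periodic (· ∈ D) (p : ℤ)

section Descent

variable {S : Finset ℕ} {s : ℕ}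

lemma isPeriodicDomSet_periodicExtension {D : Set ℤ} {a : ℤ} {m : ℕ} (hs : ∀ t ∈ S, t ≤ s)
    (hD : IsDomSet S D) (hm : 0 < m) (hwin : ∀ t < 2 * s, a + t ∈ D ↔ a + m + t ∈ D) :
    IsPeriodicDomSet S (periodicExtension D a m) m :=
  ⟨isDomSet_periodicExtension hs hD hm hwin, hm, periodic_periodicExtension⟩

lemma exists_shorter_period {D : Set ℤ} {p : ℕ} (hs : ∀ t ∈ S, t ≤ s)
    (hD : IsPeriodicDomSet S D p) (hp : 2 ^ (2 * s) < p) :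
    ∃ E q, IsPeriodicDomSet S E q ∧ q < p ∧ density E ≤ density D := by
  obtain ⟨hDdom, hp0, hDper⟩ := hD
  obtain ⟨i, j, hij, hj, hwin⟩ := exists_window_eq D (2 * s)
  set m := j - i
  have hji : (j : ℤ) = i + m := by omega
  have hm : 0 < m := by omega
  have hpm : 0 < p - m := by omega
  have hdens : density D =
      (windowCount D i m + windowCount D j (p - m) : ℕ) / ((m + (p - m) : ℕ) : ℝ) := by
    rw [density_eq_of_periodic hp0 hDper, ← windowCount_period_eq hDper i, hji,
      ← windowCount_add, Nat.add_sub_cancel' (by omega)]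
  have hwin₂ : ∀ t < 2 * s, (j : ℤ) + t ∈ D ↔ (j : ℤ) + (p - m : ℕ) + t ∈ D := fun t ht => by
    have : (j : ℤ) + (p - m : ℕ) + t = i + t + p := by omega
    rw [this]
    exact (iff_of_eq (hDper _)).trans (hwin t ht) |>.symm
  rcases div_le_mediant_or_div_le_mediant (a := windowCount D i m) (b := windowCount D j (p - m))
    (Nat.cast_pos.2 hm) (Nat.cast_pos.2 hpm) with h | h
  · refine ⟨_, m, isPeriodicDomSet_periodicExtension hs hDdom hm (by rwa [← hji]), by omega, ?_⟩
    rw [density_periodicExtension hm, hdens]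
    exact_mod_cast h
  · refine ⟨_, p - m, isPeriodicDomSet_periodicExtension hs hDdom hpm hwin₂, by omega, ?_⟩
    rw [density_periodicExtension hpm, hdens]
    exact_mod_cast h

lemma exists_period_le_two_pow {D : Set ℤ} {p : ℕ} (hs : ∀ t ∈ S, t ≤ s)
    (hD : IsPeriodicDomSet S D p) :
    ∃ E q, IsPeriodicDomSet S E q ∧ q ≤ 2 ^ (2 * s) ∧ density E ≤ density D := by
  induction p using Nat.strong_induction_on generalizing D with
  | _ p ih =>
    by_cases hp : p ≤ 2 ^ (2 * s)
    · exact ⟨D, p, hD, hp, le_rfl⟩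
    obtain ⟨E, q, hE, hqp, hED⟩ := exists_shorter_period hs hD (not_le.1 hp)
    obtain ⟨F, r, hF, hr, hFE⟩ := ih q hqp hE
    exact ⟨F, r, hF, hr, hFE.trans hED⟩

end Descent

lemma IsDomSet.mono {S : Finset ℕ} {D E : Set ℤ} (hD : IsDomSet S D) (hDE : D ⊆ E) :
    IsDomSet S E := fun z =>
  (hD z).imp (@hDE z) fun ⟨t, ht, h⟩ => ⟨t, ht, h.imp (@hDE _) (@hDE _)⟩

lemma exists_isPeriodicDomSet_density_le {S : Finset ℕ} {s : ℕ} {D : Set ℤ}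
    (hs : ∀ t ∈ S, t ≤ s) (hD : IsDomSet S D) (N : ℕ) :
    ∃ E q, IsPeriodicDomSet S E q ∧
      density E ≤ (((D ∩ Icc (-(N : ℤ)) N).ncard : ℝ) + 2 * s) / (2 * N + 1) := by
  set F := (Icc (-(N : ℤ)) N)ᶜ ∪ D
  set a : ℤ := -N - 2 * s
  have hwin : ∀ t < 2 * s, a + t ∈ F ↔ a + (2 * s + (2 * N + 1) : ℕ) + t ∈ F := fun t ht => by
    simp only [F, mem_union, mem_compl_iff, mem_Icc]
    omega
  have hcount : windowCount F a (2 * s + (2 * N + 1)) ≤ 2 * s + (D ∩ Icc (-(N : ℤ)) N).ncard := by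
    have ha : a + (2 * s : ℕ) = -N := by omega
    rw [windowCount_add, ha, ncard_inter_Icc_eq_windowCount]
    refine add_le_add (windowCount_le _ _ _) (windowCount_congr fun i hi => ?_).le
    rw [mem_union, or_iff_right]
    exact fun h => h ⟨by omega, by omega⟩
  refine ⟨_, _, isPeriodicDomSet_periodicExtension hs (hD.mono subset_union_right)
    (by omega) hwin, ?_⟩
  rw [density_periodicExtension (by omega)]
  gcongr
  · exact_mod_cast hcount.trans_eq (add_comm _ _)
  · push_cast
    linarith

lemma le_densityLow_of_forall_le {D : Set ℤ} {r C : ℝ}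
    (h : ∀ N : ℕ, r ≤ (((D ∩ Icc (-(N : ℤ)) N).ncard : ℝ) + C) / (2 * N + 1)) :
    r ≤ densityLow D := by
  have hlim : Tendsto (fun N : ℕ => r - C / (2 * N + 1)) atTop (𝓝 r) := by
    simpa using tendsto_const_nhds.sub (tendsto_const_div_two_mul_add_one C)
  have hbdd : IsBoundedUnder (· ≤ ·) atTop
      (fun N : ℕ => ((D ∩ Icc (-(N : ℤ)) N).ncard : ℝ) / (2 * N + 1)) := by
    refine isBoundedUnder_of ⟨1, fun N => div_le_one_of_le₀ ?_ (by positivity)⟩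
    rw [ncard_inter_Icc_eq_windowCount]
    exact_mod_cast windowCount_le _ _ _
  rw [← hlim.liminf_eq]
  refine liminf_le_liminf (Eventually.of_forall fun N => ?_) hlim.isBoundedUnder_ge
    hbdd.isCoboundedUnder_ge
  have := h N
  rw [add_div] at this
  linarith

lemma exists_isPeriodicDomSet_min_density (S : Finset ℕ) {L : ℕ} (hL : 0 < L) :
    ∃ D p, IsPeriodicDomSet S D p ∧ p ≤ L ∧
      ∀ E q, IsPeriodicDomSet S E q → q ≤ L → density D ≤ density E := by
  set R := {x | ∃ E q, IsPeriodicDomSet S E q ∧ q ≤ L ∧ density E = x}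
  have hfin : R.Finite := by
    refine ((finite_Iic L).prod (finite_Iic L) |>.image fun c : ℕ × ℕ => (c.1 : ℝ) / c.2).subset ?_
    rintro _ ⟨E, q, ⟨-, hq, hE⟩, hqL, rfl⟩
    exact ⟨(windowCount E 0 q, q), ⟨(windowCount_le _ _ _).trans hqL, hqL⟩,
      (density_eq_of_periodic hq hE).symm⟩
  have hne : R.Nonempty := ⟨_, univ, 1, ⟨fun _ => .inl trivial, one_pos, fun _ => rfl⟩, hL, rfl⟩
  obtain ⟨_, ⟨D, p, hD, hpL, rfl⟩, hmin⟩ := R.exists_min_image id hfin hne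
  exact ⟨D, p, hD, hpL, fun E q hE hqL => hmin _ ⟨E, q, hE, hqL, rfl⟩⟩

/-- The minimum density of a dominating set of `G(S)` is achieved by a periodic
dominating set with period at most `(2s) * 2 ^ (2s)` where `s = max S`. -/
theorem exists_periodic_min_density_dominating_set
    (S : Finset ℕ) (hS : S.Nonempty) (hSpos : ∀ n ∈ S, 0 < n) :
    ∃ (D : Set ℤ) (p : ℕ),
      IsDomSet S D ∧
      0 < p ∧ p ≤ (2 * S.max' hS) * 2 ^ (2 * S.max' hS) ∧
      (∀ z : ℤ, z + (p : ℤ) ∈ D ↔ z ∈ D) ∧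
      ∀ D' : Set ℤ, IsDomSet S D' → density D ≤ densityLow D' := by
  set s := S.max' hS
  have hs : ∀ t ∈ S, t ≤ s := fun t ht => S.le_max' t ht
  obtain ⟨D, p, ⟨hDdom, hp, hDper⟩, hps, hmin⟩ :=
    exists_isPeriodicDomSet_min_density S (Nat.two_pow_pos (2 * s))
  refine ⟨D, p, hDdom, hp, hps.trans (Nat.le_mul_of_pos_left _ ?_), fun z => iff_of_eq (hDper z),
    fun D' hD' => le_densityLow_of_forall_le (C := 2 * s) fun N => ?_⟩
  · exact Nat.mul_pos two_pos (hSpos s (S.max'_mem hS))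
  obtain ⟨E, q, hE, hEdens⟩ := exists_isPeriodicDomSet_density_le hs hD' N
  obtain ⟨F, r, hF, hr, hFE⟩ := exists_period_le_two_pow hs hE
  exact (hmin F r hF hr).trans (hFE.trans hEdens)
end

section
/- For every fixed integer i ≥ 1, the limit as k → ∞ of ᾱ({1, 2i, k}) equals i/(2i+1). -/
open Filter

/-- A set of integers is independent in the distance graph `G(S)` if no two distinct
elements differ by an element of `S`. -/
def IsIndepSet (S : Finset ℕ) (A : Set ℤ) : Prop :=
  ∀ a ∈ A, ∀ b ∈ A, a ≠ b → (a - b).natAbs ∉ S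

/-- The independence ratio of the distance graph `G(S)`. -/
noncomputable def indRatio (S : Finset ℕ) : ℝ :=
  sSup (density '' {A : Set ℤ | IsIndepSet S A})

/-!
A set avoiding the differences `1` and `2i` meets any `2i + 1` consecutive integers in at most
`i` points: if it contains the first one, it misses the second and the last, and the remaining
`2i - 2` integers split into pairs of neighbours; otherwise the other `2i` integers do. Hence
`ᾱ({1, 2i, k}) ≤ i / (2i + 1)`. Conversely, the residues `0, 2, …, 2i - 2` modulo `2i + 1`,
restricted to the first `k + 1 - 2i` residues modulo `k + 1`, avoid `1`, `2i` and `k` and have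
density `i / (2i + 1) - O(i / k)`.
-/

open Set

lemma Int.ModEq.eq_or_eq_sub {p a b : ℤ} (h : a ≡ b [ZMOD p]) (hlo : b - p ≤ a)
    (hhi : a < b + p) : a = b ∨ a = b - p := by
  obtain hab | hab := le_or_gt b a
  · left
    have := Int.eq_zero_of_abs_lt_dvd h.dvd (abs_lt.mpr ⟨by omega, by omega⟩)
    omega
  · right
    have := Int.eq_zero_of_abs_lt_dvd (dvd_sub h.dvd dvd_rfl) (abs_lt.mpr ⟨by omega, by omega⟩)
    omega

lemma IsIndepSet.sub_ne {S : Finset ℕ} {A : Set ℤ} (hA : IsIndepSet S A) {a b : ℤ}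
    (ha : a ∈ A) (hb : b ∈ A) {d : ℕ} (hd : d ∈ S) (hd0 : d ≠ 0) : a - b ≠ d := fun h =>
  hA a ha b hb (by omega) (by rwa [h, Int.natAbs_natCast])

lemma ncard_inter_Ico_eq_sum (A : Set ℤ) (x : ℤ) (L J : ℕ) :
    (A ∩ Ico x (x + J * L)).ncard =
      ∑ j ∈ Finset.range J, (A ∩ Ico (x + j * L) (x + j * L + L)).ncard := by
  induction J with
  | zero => simp
  | succ J ih =>
    have hsplit : Ico x (x + (J + 1 : ℕ) * L) =
        Ico x (x + J * L) ∪ Ico (x + J * L) (x + J * L + L) := by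
      rw [Ico_union_Ico_eq_Ico (le_add_of_nonneg_right (by positivity)) (by omega)]
      push_cast
      ring_nf
    rw [Finset.sum_range_succ, ← ih, hsplit, inter_union_distrib_left,
      ncard_union_eq (disjoint_of_subset inter_subset_right inter_subset_right
        Ico_disjoint_Ico_same) (toFinite _) (toFinite _)]

lemma ncard_inter_Ico_mul_le {A : Set ℤ} {L c : ℕ}
    (h : ∀ x : ℤ, (A ∩ Ico x (x + L)).ncard ≤ c) (x : ℤ) (J : ℕ) :
    (A ∩ Ico x (x + J * L)).ncard ≤ J * c := by
  rw [ncard_inter_Ico_eq_sum]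
  simpa using Finset.sum_le_card_nsmul (Finset.range J) _ c fun j _ => h (x + j * L)

lemma mul_le_ncard_inter_Ico {A : Set ℤ} {L c : ℕ}
    (h : ∀ x : ℤ, c ≤ (A ∩ Ico x (x + L)).ncard) (x : ℤ) (J : ℕ) :
    J * c ≤ (A ∩ Ico x (x + J * L)).ncard := by
  rw [ncard_inter_Ico_eq_sum]
  simpa using Finset.card_nsmul_le_sum (Finset.range J) _ c fun j _ => h (x + j * L)

noncomputable def densityRatio (A : Set ℤ) (N : ℕ) : ℝ :=
  ((A ∩ Icc (-(N : ℤ)) N).ncard : ℝ) / (2 * N + 1)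

lemma density_eq_limsup_densityRatio (A : Set ℤ) :
    density A = limsup (densityRatio A) atTop := rfl

lemma densityRatio_nonneg (A : Set ℤ) (N : ℕ) : 0 ≤ densityRatio A N := by
  unfold densityRatio; positivity

lemma densityRatio_le_one (A : Set ℤ) (N : ℕ) : densityRatio A N ≤ 1 := by
  have hcard : (A ∩ Icc (-(N : ℤ)) N).ncard ≤ 2 * N + 1 := by
    calc (A ∩ Icc (-(N : ℤ)) N).ncard ≤ (Icc (-(N : ℤ)) N).ncard :=
          ncard_le_ncard inter_subset_right (finite_Icc _ _)
      _ = 2 * N + 1 := by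
          rw [← Finset.coe_Icc, ncard_coe_finset, Int.card_Icc]; omega
  rw [densityRatio, div_le_one (by positivity)]
  exact_mod_cast hcard

lemma density_le_of_tendsto {A : Set ℤ} {g : ℕ → ℝ} {a : ℝ} (hg : Tendsto g atTop (nhds a))
    (h : ∀ N, densityRatio A N ≤ g N) : density A ≤ a := by
  rw [density_eq_limsup_densityRatio, ← hg.limsup_eq]
  exact limsup_le_limsup (.of_forall h)
    (isBoundedUnder_of ⟨0, densityRatio_nonneg A⟩).isCoboundedUnder_le hg.isBoundedUnder_le

lemma le_density_of_tendsto {A : Set ℤ} {g : ℕ → ℝ} {a : ℝ} (hg : Tendsto g atTop (nhds a))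
    (h : ∀ N, g N ≤ densityRatio A N) : a ≤ density A := by
  rw [density_eq_limsup_densityRatio, ← hg.limsup_eq]
  exact limsup_le_limsup (.of_forall h) hg.isBoundedUnder_ge.isCoboundedUnder_le
    (isBoundedUnder_of ⟨1, densityRatio_le_one A⟩)

lemma density_le_one (A : Set ℤ) : density A ≤ 1 :=
  density_le_of_tendsto tendsto_const_nhds (densityRatio_le_one A)

lemma tendsto_div_two_mul_add_one (c : ℝ) :
    Tendsto (fun N : ℕ => c / (2 * N + 1)) atTop (nhds 0) :=
  tendsto_const_nhds.div_atTop <| tendsto_atTop_add_const_right _ 1 <|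
    tendsto_natCast_atTop_atTop.const_mul_atTop two_pos

lemma density_le_of_forall_ncard_inter_Ico_le {A : Set ℤ} {L c : ℕ} (hL : 0 < L)
    (h : ∀ x : ℤ, (A ∩ Ico x (x + L)).ncard ≤ c) : density A ≤ c / L := by
  have hg := (tendsto_div_two_mul_add_one c).const_add ((c : ℝ) / L)
  rw [add_zero] at hg
  refine density_le_of_tendsto hg fun N => ?_
  set J := (2 * N + 1) / L + 1
  have hcover : 2 * N + 1 ≤ J * L := by
    simpa [J, add_mul] using (Nat.lt_div_mul_add (a := 2 * N + 1) hL).le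
  have hcount : (A ∩ Icc (-(N : ℤ)) N).ncard ≤ J * c :=
    (ncard_le_ncard (inter_subset_inter_right A fun n hn => by
      simp only [mem_Icc, mem_Ico] at hn ⊢; omega) (toFinite _)).trans
      (ncard_inter_Ico_mul_le h (-(N : ℤ)) J)
  have hJ : (J : ℝ) ≤ (2 * N + 1) / L + 1 := by
    simpa [J] using Nat.cast_div_le (m := 2 * N + 1) (n := L)
  rw [densityRatio, div_le_iff₀ (by positivity)]
  calc ((A ∩ Icc (-(N : ℤ)) N).ncard : ℝ) ≤ J * c := by exact_mod_cast hcount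
    _ ≤ ((2 * N + 1) / L + 1) * c := by gcongr
    _ = _ := by field_simp

lemma le_density_of_forall_le_ncard_inter_Ico {A : Set ℤ} {L c : ℕ} (hL : 0 < L)
    (h : ∀ x : ℤ, c ≤ (A ∩ Ico x (x + L)).ncard) : (c : ℝ) / L ≤ density A := by
  have hg := (tendsto_div_two_mul_add_one c).const_sub ((c : ℝ) / L)
  rw [sub_zero] at hg
  refine le_density_of_tendsto hg fun N => ?_
  set J := (2 * N + 1) / L
  have hinside : J * L ≤ 2 * N + 1 := Nat.div_mul_le_self _ _
  have hcount : J * c ≤ (A ∩ Icc (-(N : ℤ)) N).ncard :=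
    (mul_le_ncard_inter_Ico h (-(N : ℤ)) J).trans (ncard_le_ncard (inter_subset_inter_right A
      fun n hn => by simp only [mem_Icc, mem_Ico] at hn ⊢; omega) (toFinite _))
  have hJ : (2 * N + 1 : ℝ) / L - 1 ≤ J := by
    have : 2 * N + 1 ≤ (J + 1) * L := by
      simpa [J, add_mul] using (Nat.lt_div_mul_add (a := 2 * N + 1) hL).le
    rw [sub_le_iff_le_add, div_le_iff₀ (by positivity)]
    exact_mod_cast this
  rw [densityRatio, le_div_iff₀ (by positivity)]
  calc ((c : ℝ) / L - c / (2 * N + 1)) * (2 * N + 1) = ((2 * N + 1) / L - 1) * c := by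
        field_simp
    _ ≤ J * c := by gcongr
    _ ≤ _ := by exact_mod_cast hcount

lemma density_le_indRatio {S : Finset ℕ} {A : Set ℤ} (hA : IsIndepSet S A) :
    density A ≤ indRatio S :=
  le_csSup ⟨1, by rintro _ ⟨B, -, rfl⟩; exact density_le_one B⟩ ⟨A, hA, rfl⟩

lemma indRatio_le {S : Finset ℕ} {a : ℝ} (ha : 0 ≤ a)
    (h : ∀ A, IsIndepSet S A → density A ≤ a) : indRatio S ≤ a :=
  Real.sSup_le (by rintro _ ⟨A, hA, rfl⟩; exact h A hA) ha

namespace IsIndepSet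

variable {S : Finset ℕ} {A : Set ℤ}

lemma ncard_inter_Ico_two_le_one (hA : IsIndepSet S A) (h1 : 1 ∈ S) (x : ℤ) :
    (A ∩ Ico x (x + 2)).ncard ≤ 1 := by
  refine (ncard_le_one (toFinite _)).mpr fun a ⟨ha, hax⟩ b ⟨hb, hbx⟩ => ?_
  have hab := hA.sub_ne ha hb h1 one_ne_zero
  have hba := hA.sub_ne hb ha h1 one_ne_zero
  simp only [mem_Ico] at hax hbx
  omega

lemma ncard_inter_Ico_le {i : ℕ} (hA : IsIndepSet S A) (hi : 1 ≤ i) (h1 : 1 ∈ S)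
    (h2i : 2 * i ∈ S) (x : ℤ) : (A ∩ Ico x (x + (2 * i + 1 : ℕ))).ncard ≤ i := by
  have hpairs := ncard_inter_Ico_mul_le (hA.ncard_inter_Ico_two_le_one h1)
  by_cases hx : x ∈ A
  · have hsub : A ∩ Ico x (x + (2 * i + 1 : ℕ)) ⊆
        insert x (A ∩ Ico (x + 2) (x + 2 + (i - 1 : ℕ) * (2 : ℕ))) := by
      rintro a ⟨ha, hax⟩
      have h1a := hA.sub_ne ha hx h1 one_ne_zero
      have h2a := hA.sub_ne ha hx h2i (by omega)
      simp only [mem_Ico, mem_insert_iff, mem_inter_iff] at hax ⊢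
      push_cast at hax h2a ⊢
      obtain rfl | hne := eq_or_ne a x
      · exact .inl rfl
      · exact .inr ⟨ha, by omega, by omega⟩
    calc _ ≤ _ := ncard_le_ncard hsub (toFinite _)
      _ ≤ (A ∩ Ico (x + 2) (x + 2 + (i - 1 : ℕ) * (2 : ℕ))).ncard + 1 := ncard_insert_le _ _
      _ ≤ (i - 1) * 1 + 1 := by gcongr; exact hpairs _ _
      _ = i := by omega
  · have hsub : A ∩ Ico x (x + (2 * i + 1 : ℕ)) ⊆ A ∩ Ico (x + 1) (x + 1 + i * (2 : ℕ)) := by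
      rintro a ⟨ha, hax⟩
      have : a ≠ x := by rintro rfl; exact hx ha
      simp only [mem_Ico, mem_inter_iff] at hax ⊢
      push_cast at hax ⊢
      exact ⟨ha, by omega, by omega⟩
    calc _ ≤ _ := ncard_le_ncard hsub (toFinite _)
      _ ≤ i * 1 := hpairs _ _
      _ = i := mul_one i

lemma density_le {i : ℕ} (hA : IsIndepSet S A) (hi : 1 ≤ i) (h1 : 1 ∈ S) (h2i : 2 * i ∈ S) :
    density A ≤ i / (2 * i + 1) := by
  simpa using density_le_of_forall_ncard_inter_Ico_le (by omega) (hA.ncard_inter_Ico_le hi h1 h2i)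

end IsIndepSet

lemma isIndepSet_setOf_emod_mem {S : Finset ℕ} {p : ℤ} {P : Set ℤ}
    (hP : ∀ x ∈ P, ∀ y ∈ P, ∀ d ∈ S, ¬x - y ≡ d [ZMOD p]) : IsIndepSet S {n | n % p ∈ P} := by
  intro a ha b hb _ hd
  obtain h | h : a - b = (a - b).natAbs ∨ b - a = (a - b).natAbs := by omega
  · exact hP _ ha _ hb _ hd (((Int.mod_modEq a p).sub (Int.mod_modEq b p)).trans
      (congrArg (· % p) h))
  · exact hP _ hb _ ha _ hd (((Int.mod_modEq b p).sub (Int.mod_modEq a p)).trans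
      (congrArg (· % p) h))

lemma ncard_inter_Ico_setOf_emod_mem {p : ℤ} (hp : 0 < p) (P : Set ℤ) (x : ℤ) :
    ({n | n % p ∈ P} ∩ Ico x (x + p)).ncard = (P ∩ Ico 0 p).ncard := by
  refine ncard_congr (fun n _ => n % p) (fun n hn => ⟨hn.1, Int.emod_nonneg _ hp.ne',
    Int.emod_lt_of_pos _ hp⟩) (fun m n ⟨_, hm⟩ ⟨_, hn⟩ hmn => ?_) (fun r hr => ?_)
  · simp only [mem_Ico] at hm hn
    have := Int.eq_zero_of_abs_lt_dvd (Int.ModEq.dvd hmn) (abs_lt.mpr ⟨by omega, by omega⟩)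
    omega
  · have hr' : (x + (r - x) % p) % p = r := by
      rw [Int.add_emod, Int.emod_emod, ← Int.add_emod, add_sub_cancel,
        Int.emod_eq_of_lt hr.2.1 hr.2.2]
    refine ⟨x + (r - x) % p, ⟨by rw [mem_ofPred_eq, hr']; exact hr.1, ?_⟩, hr'⟩
    have := Int.emod_nonneg (r - x) hp.ne'
    have := Int.emod_lt_of_pos (r - x) hp
    simp only [mem_Ico]; omega

def stripes (i : ℕ) : Set ℤ := {n | n % (2 * i + 1) ∈ (fun s : ℤ => 2 * s) '' Ico 0 i}

lemma isIndepSet_stripes (i : ℕ) : IsIndepSet {1, 2 * i} (stripes i) := by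
  refine isIndepSet_setOf_emod_mem ?_
  rintro _ ⟨s, hs, rfl⟩ _ ⟨t, ht, rfl⟩ d hd h
  simp only [mem_Ico] at hs ht
  dsimp only at h
  simp only [Finset.mem_insert, Finset.mem_singleton] at hd
  obtain rfl | rfl := hd
  · have := h.eq_or_eq_sub (by push_cast; omega) (by push_cast; omega)
    omega
  · have hm1 : ((2 * i : ℕ) : ℤ) ≡ -1 [ZMOD 2 * i + 1] :=
      Int.modEq_iff_dvd.mpr ⟨-1, by push_cast; ring⟩
    have := (h.trans hm1).eq_or_eq_sub (by omega) (by omega)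
    omega

lemma ncard_inter_Ico_stripes (i : ℕ) (x : ℤ) :
    (stripes i ∩ Ico x (x + (2 * i + 1 : ℕ))).ncard = i := by
  have himage : (fun s : ℤ => 2 * s) '' Ico 0 i ∩ Ico 0 (2 * i + 1) =
      (fun s : ℤ => 2 * s) '' Ico 0 i := by
    refine inter_eq_left.mpr ?_
    rintro _ ⟨s, hs, rfl⟩
    simp only [mem_Ico] at hs ⊢
    omega
  push_cast
  rw [stripes, ncard_inter_Ico_setOf_emod_mem (by positivity), himage,
    ncard_image_of_injective _ (mul_right_injective₀ two_ne_zero), ← Finset.coe_Ico,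
    ncard_coe_finset, Int.card_Ico, sub_zero, Int.toNat_natCast]

/-- Modulo `k + 1` the distances `1, 2i, k` become `1, 2i, -1`, which `stripes i` avoids; the `2i`
unused residues before each multiple of `k + 1` rule out the other representatives. -/
def periodicStripes (i k : ℕ) : Set ℤ := {n | n % (k + 1) ∈ stripes i ∩ Ico 0 (k + 1 - 2 * i)}

lemma isIndepSet_periodicStripes {i : ℕ} (hi : 1 ≤ i) (k : ℕ) :
    IsIndepSet {1, 2 * i, k} (periodicStripes i k) := by
  refine isIndepSet_setOf_emod_mem ?_
  rintro x ⟨hx, hxI⟩ y ⟨hy, hyI⟩ d hd h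
  simp only [mem_Ico] at hxI hyI
  have hS := isIndepSet_stripes i
  have h1 := hS.sub_ne hx hy (by simp) one_ne_zero
  have h1' := hS.sub_ne hy hx (by simp) one_ne_zero
  have h2 := hS.sub_ne (d := 2 * i) hx hy (by simp) (by omega)
  simp only [Finset.mem_insert, Finset.mem_singleton] at hd
  obtain rfl | rfl | rfl := hd
  · have := h.eq_or_eq_sub (by omega) (by omega)
    omega
  · have := h.eq_or_eq_sub (by omega) (by omega)
    omega
  · have hm1 : (d : ℤ) ≡ -1 [ZMOD d + 1] := Int.modEq_iff_dvd.mpr ⟨-1, by ring⟩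
    have := (h.trans hm1).eq_or_eq_sub (by omega) (by omega)
    omega

lemma le_density_periodicStripes (i k : ℕ) :
    (((k + 1 - 2 * i) / (2 * i + 1) * i : ℕ) : ℝ) / (k + 1 : ℕ) ≤
      density (periodicStripes i k) := by
  refine le_density_of_forall_le_ncard_inter_Ico (Nat.succ_pos k) fun x => ?_
  set J := (k + 1 - 2 * i) / (2 * i + 1)
  have hJ : (J : ℤ) * (2 * i + 1) ≤ ((k + 1 - 2 * i : ℕ) : ℤ) := by
    exact_mod_cast Nat.div_mul_le_self _ _
  push_cast
  rw [periodicStripes, ncard_inter_Ico_setOf_emod_mem (by positivity)]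
  calc J * i ≤ (stripes i ∩ Ico 0 (0 + J * (2 * i + 1 : ℕ))).ncard :=
        mul_le_ncard_inter_Ico (fun x => (ncard_inter_Ico_stripes i x).ge) 0 J
    _ ≤ _ := ncard_le_ncard (fun n ⟨hs, hn⟩ => by
          simp only [mem_Ico] at hn; push_cast at hn
          exact ⟨⟨hs, by omega, by omega⟩, by omega, by omega⟩) (toFinite _)

lemma le_indRatio_one_two_mul {i : ℕ} (hi : 1 ≤ i) (k : ℕ) :
    (i : ℝ) / (2 * i + 1) - 2 * i / (k + 1) ≤ indRatio {1, 2 * i, k} := by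
  refine le_trans ?_ ((le_density_periodicStripes i k).trans
    (density_le_indRatio (isIndepSet_periodicStripes hi k)))
  have hJ : k + 1 ≤ (k + 1 - 2 * i) / (2 * i + 1) * (2 * i + 1) + 4 * i := by
    have := Nat.lt_div_mul_add (a := k + 1 - 2 * i) (by omega : 0 < 2 * i + 1)
    omega
  set J := (k + 1 - 2 * i) / (2 * i + 1)
  have hJ' : (k + 1 : ℝ) ≤ J * (2 * i + 1) + 4 * i := by exact_mod_cast hJ
  push_cast
  rw [sub_le_iff_le_add, ← add_div, div_le_div_iff₀ (by positivity) (by positivity)]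
  nlinarith [mul_le_mul_of_nonneg_left hJ' (Nat.cast_nonneg (α := ℝ) i)]

lemma indRatio_one_two_mul_le {i : ℕ} (hi : 1 ≤ i) (k : ℕ) :
    indRatio {1, 2 * i, k} ≤ i / (2 * i + 1) :=
  indRatio_le (by positivity) fun _ hA => hA.density_le hi (by simp) (by simp)

/-- For fixed `i ≥ 1`, `ᾱ({1, 2i, k}) → i/(2i+1)` as `k → ∞`. -/
theorem tendsto_indRatio_one_even_k (i : ℕ) (hi : 1 ≤ i) :
    Filter.Tendsto (fun k : ℕ => indRatio ({1, 2 * i, k} : Finset ℕ))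
      Filter.atTop (nhds ((i : ℝ) / (2 * (i : ℝ) + 1))) := by
  have herr : Tendsto (fun k : ℕ => (2 * i : ℝ) / (k + 1)) atTop (nhds 0) :=
    tendsto_const_nhds.div_atTop (tendsto_atTop_add_const_right _ 1 tendsto_natCast_atTop_atTop)
  have hlower := (tendsto_const_nhds (x := (i : ℝ) / (2 * i + 1))).sub herr
  rw [sub_zero] at hlower
  exact tendsto_of_tendsto_of_tendsto_of_le_of_le hlower tendsto_const_nhds
    (le_indRatio_one_two_mul hi) (indRatio_one_two_mul_le hi)
end
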